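/- arXiv:quant-ph/0011019 — 2 statements merged into one kernel-verified Lean document; each statement's English description precedes it below -/
import Mathlib

section
/- Let E > 0 and 0 ≤ y ≤ 1 be real numbers, let M(E,y) be the 2×2 complex matrix E·!![1+y², y·√(1−y²); y·√(1−y²), 1−y²], and set Q = exp(−i·(2π/E)·M(E,y)). With X₁ = (1/√2)·(√(1+y), √(1−y))ᵀ, X₂ = (1/√2)·(−√(1−y), √(1+y))ᵀ, and s(y) = (y, √(1−y²))ᵀ, the following hold: Q·X₁ = e^{−i2πy}·X₁, Q·X₂ = e^{i2πy}·X₂, and for every natural number m, Q^m·s(y) = √((1+y)/2)·e^{−i2mπy}·X₁ + √((1−y)/2)·e^{i2mπy}·X₂. -/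
/-!
The vectors `X₁`, `X₂` are eigenvectors of `M(E, y)` with eigenvalues `E (1 + y)` and
`E (1 - y)`: this is a direct computation once `√(1 - y²)` is written as `√(1 + y) √(1 - y)`.
Hence `Q = exp (-(2πi/E) M)` multiplies them by `exp (-2πi (1 ± y)) = exp (∓2πi y)`, and since
`s(y) = √((1 + y)/2) X₁ + √((1 - y)/2) X₂`, the action of `Qᵐ` on `s(y)` follows by linearity.
-/

open Matrix

/-- The matrix representation of the search Hamiltonian on its invariant plane. -/
noncomputable def searchHamiltonianMatrix (E y : ℝ) : Matrix (Fin 2) (Fin 2) ℂ :=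
  (E : ℂ) • !![((1 + y ^ 2 : ℝ) : ℂ), ((y * Real.sqrt (1 - y ^ 2) : ℝ) : ℂ);
               ((y * Real.sqrt (1 - y ^ 2) : ℝ) : ℂ), ((1 - y ^ 2 : ℝ) : ℂ)]

namespace Matrix

variable {m R : Type*} [Fintype m] [DecidableEq m]

theorem pow_mulVec_of_mulVec_eq_smul [CommSemiring R] {A : Matrix m m R} {v : m → R} {μ : R}
    (h : A *ᵥ v = μ • v) (n : ℕ) : (A ^ n) *ᵥ v = μ ^ n • v := by
  induction n with
  | zero => simp
  | succ n ih => rw [pow_succ, ← mulVec_mulVec, h, mulVec_smul, ih, smul_smul, pow_succ']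

attribute [local instance] Matrix.linftyOpNormedRing Matrix.linftyOpNormedAlgebra in
theorem exp_mulVec_of_mulVec_eq_smul {𝕂 : Type*} [RCLike 𝕂] {A : Matrix m m 𝕂} {v : m → 𝕂} {μ : 𝕂}
    (h : A *ᵥ v = μ • v) : NormedSpace.exp A *ᵥ v = NormedSpace.exp μ • v := by
  have hA := (NormedSpace.exp_series_hasSum_exp' (𝕂 := 𝕂) A).map (mulVec.addMonoidHomLeft v)
    (continuous_id.matrix_mulVec continuous_const)
  have hμ := (NormedSpace.exp_series_hasSum_exp' (𝕂 := 𝕂) μ).smul_const v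
  refine hA.unique (hμ.congr_fun fun n => ?_)
  simp [mulVec.addMonoidHomLeft, smul_mulVec, pow_mulVec_of_mulVec_eq_smul h, smul_smul]

end Matrix

open Complex

noncomputable def searchEigenvector₁ (y : ℝ) : Fin 2 → ℂ :=
  (1 / (Real.sqrt 2 : ℂ)) • ![(Real.sqrt (1 + y) : ℂ), (Real.sqrt (1 - y) : ℂ)]

noncomputable def searchEigenvector₂ (y : ℝ) : Fin 2 → ℂ :=
  (1 / (Real.sqrt 2 : ℂ)) • ![-(Real.sqrt (1 - y) : ℂ), (Real.sqrt (1 + y) : ℂ)]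

noncomputable def countingUnitary (E y : ℝ) : Matrix (Fin 2) (Fin 2) ℂ :=
  NormedSpace.exp ((-(I * ((2 * Real.pi / E : ℝ) : ℂ))) • searchHamiltonianMatrix E y)

theorem sqrt_one_sub_sq_eq {y : ℝ} (hy : -1 ≤ y) :
    Real.sqrt (1 - y ^ 2) = Real.sqrt (1 + y) * Real.sqrt (1 - y) := by
  rw [← Real.sqrt_mul (by linarith)]; ring_nf

theorem searchHamiltonianMatrix_mulVec_searchEigenvector₁ (E : ℝ) {y : ℝ} (hy₀ : -1 ≤ y)
    (hy₁ : y ≤ 1) :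
    searchHamiltonianMatrix E y *ᵥ searchEigenvector₁ y =
      (E * (1 + y) : ℂ) • searchEigenvector₁ y := by
  have ha : (Real.sqrt (1 + y) : ℂ) ^ 2 = 1 + y := mod_cast Real.sq_sqrt (by linarith)
  have hb : (Real.sqrt (1 - y) : ℂ) ^ 2 = 1 - y := mod_cast Real.sq_sqrt (by linarith)
  ext i
  fin_cases i <;>
    simp only [searchHamiltonianMatrix, searchEigenvector₁, mulVec, dotProduct,
      Fin.sum_univ_two, Matrix.smul_apply, of_apply, Pi.smul_apply, smul_eq_mul, smul_cons, smul_empty,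
      cons_val', cons_val_zero, cons_val_one, cons_val_fin_one, Fin.isValue, one_div,
      sqrt_one_sub_sq_eq hy₀] <;>
    push_cast
  · linear_combination (E * y * Real.sqrt (1 + y) / Real.sqrt 2 : ℂ) * hb
  · linear_combination (E * y * Real.sqrt (1 - y) / Real.sqrt 2 : ℂ) * ha

theorem searchHamiltonianMatrix_mulVec_searchEigenvector₂ (E : ℝ) {y : ℝ} (hy₀ : -1 ≤ y)
    (hy₁ : y ≤ 1) :
    searchHamiltonianMatrix E y *ᵥ searchEigenvector₂ y =
      (E * (1 - y) : ℂ) • searchEigenvector₂ y := by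
  have ha : (Real.sqrt (1 + y) : ℂ) ^ 2 = 1 + y := mod_cast Real.sq_sqrt (by linarith)
  have hb : (Real.sqrt (1 - y) : ℂ) ^ 2 = 1 - y := mod_cast Real.sq_sqrt (by linarith)
  ext i
  fin_cases i <;>
    simp only [searchHamiltonianMatrix, searchEigenvector₂, mulVec, dotProduct,
      Fin.sum_univ_two, Matrix.smul_apply, of_apply, Pi.smul_apply, smul_eq_mul, smul_cons, smul_empty,
      cons_val', cons_val_zero, cons_val_one, cons_val_fin_one, Fin.isValue, one_div,
      sqrt_one_sub_sq_eq hy₀] <;>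
    push_cast
  · linear_combination (E * y * Real.sqrt (1 - y) / Real.sqrt 2 : ℂ) * ha
  · linear_combination -(E * y * Real.sqrt (1 + y) / Real.sqrt 2 : ℂ) * hb

theorem exp_two_pi_div_mul_add (E : ℝ) (hE : E ≠ 0) (z : ℂ) :
    exp (-(I * ((2 * Real.pi / E : ℝ) : ℂ)) * (E * (1 + z))) = exp (-(2 * Real.pi * I * z)) := by
  have hE' : (E : ℂ) ≠ 0 := mod_cast hE
  rw [← exp_periodic.sub_eq (-(2 * Real.pi * I * z))]
  congr 1
  push_cast
  field_simp
  ring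

theorem countingUnitary_mulVec_searchEigenvector₁ {E y : ℝ} (hE : E ≠ 0) (hy₀ : -1 ≤ y)
    (hy₁ : y ≤ 1) :
    countingUnitary E y *ᵥ searchEigenvector₁ y =
      exp (-(I * ((2 * Real.pi * y : ℝ) : ℂ))) • searchEigenvector₁ y := by
  rw [countingUnitary, exp_mulVec_of_mulVec_eq_smul (by
    rw [smul_mulVec, searchHamiltonianMatrix_mulVec_searchEigenvector₁ E hy₀ hy₁, smul_smul])]
  rw [← exp_eq_exp_ℂ, exp_two_pi_div_mul_add E hE]
  push_cast
  ring_nf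

theorem countingUnitary_mulVec_searchEigenvector₂ {E y : ℝ} (hE : E ≠ 0) (hy₀ : -1 ≤ y)
    (hy₁ : y ≤ 1) :
    countingUnitary E y *ᵥ searchEigenvector₂ y =
      exp (I * ((2 * Real.pi * y : ℝ) : ℂ)) • searchEigenvector₂ y := by
  rw [countingUnitary, exp_mulVec_of_mulVec_eq_smul (by
    rw [smul_mulVec, searchHamiltonianMatrix_mulVec_searchEigenvector₂ E hy₀ hy₁, smul_smul]),
    sub_eq_add_neg, ← exp_eq_exp_ℂ, exp_two_pi_div_mul_add E hE]
  push_cast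
  ring_nf

theorem initialState_eq {y : ℝ} (hy₀ : -1 ≤ y) (hy₁ : y ≤ 1) :
    ![(y : ℂ), (Real.sqrt (1 - y ^ 2) : ℂ)] =
      (Real.sqrt ((1 + y) / 2) : ℂ) • searchEigenvector₁ y +
        (Real.sqrt ((1 - y) / 2) : ℂ) • searchEigenvector₂ y := by
  have ha : (Real.sqrt (1 + y) : ℂ) ^ 2 = 1 + y := mod_cast Real.sq_sqrt (by linarith)
  have hb : (Real.sqrt (1 - y) : ℂ) ^ 2 = 1 - y := mod_cast Real.sq_sqrt (by linarith)
  have h2 : (Real.sqrt 2 : ℂ) ^ 2 = 2 := mod_cast Real.sq_sqrt (by norm_num)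
  ext i
  fin_cases i <;>
    simp only [searchEigenvector₁, searchEigenvector₂, Pi.add_apply, smul_cons, smul_empty,
      smul_eq_mul, Fin.zero_eta, Fin.mk_one, cons_val_zero, cons_val_one, cons_val_fin_one, Fin.isValue,
      one_div, mul_neg,
      Real.sqrt_div (show 0 ≤ 1 + y by linarith), Real.sqrt_div (show 0 ≤ 1 - y by linarith),
      sqrt_one_sub_sq_eq hy₀, ofReal_mul, ofReal_div] <;>
    field_simp
  · linear_combination y * h2 - ha + hb
  · linear_combination (Real.sqrt (1 + y) * Real.sqrt (1 - y) : ℂ) * h2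

/-- **Formulas (2.22)–(2.23)** of Chen–Diao: the unitary `Q = e^{−iH(2π/E)}`
acts on the eigenvectors by phases `e^{∓i2πy}`, and
`Qᵐ|s⟩ = √((1+y)/2)·e^{−i2mπy}·X₁ + √((1−y)/2)·e^{i2mπy}·X₂`. -/
theorem counting_unitary_Q_action (E y : ℝ) (hE : 0 < E) (hy0 : 0 ≤ y) (hy1 : y ≤ 1)
    (Q : Matrix (Fin 2) (Fin 2) ℂ)
    (hQ : Q = NormedSpace.exp
        ((-(Complex.I * ((2 * Real.pi / E : ℝ) : ℂ))) • searchHamiltonianMatrix E y))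
    (X₁ X₂ : Fin 2 → ℂ)
    (hX₁ : X₁ = (1 / (Real.sqrt 2 : ℂ)) •
        ![(Real.sqrt (1 + y) : ℂ), (Real.sqrt (1 - y) : ℂ)])
    (hX₂ : X₂ = (1 / (Real.sqrt 2 : ℂ)) •
        ![-(Real.sqrt (1 - y) : ℂ), (Real.sqrt (1 + y) : ℂ)]) :
    Q.mulVec X₁ = Complex.exp (-(Complex.I * ((2 * Real.pi * y : ℝ) : ℂ))) • X₁ ∧
    Q.mulVec X₂ = Complex.exp (Complex.I * ((2 * Real.pi * y : ℝ) : ℂ)) • X₂ ∧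
    ∀ m : ℕ, (Q ^ m).mulVec ![(y : ℂ), (Real.sqrt (1 - y ^ 2) : ℂ)] =
      ((Real.sqrt ((1 + y) / 2) : ℂ) *
          Complex.exp (-(Complex.I * ((2 * m * Real.pi * y : ℝ) : ℂ)))) • X₁ +
      ((Real.sqrt ((1 - y) / 2) : ℂ) *
          Complex.exp (Complex.I * ((2 * m * Real.pi * y : ℝ) : ℂ))) • X₂ := by
  obtain rfl : Q = countingUnitary E y := hQ
  obtain rfl : X₁ = searchEigenvector₁ y := hX₁
  obtain rfl : X₂ = searchEigenvector₂ y := hX₂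
  have hy : -1 ≤ y := by linarith
  have hQ₁ := countingUnitary_mulVec_searchEigenvector₁ hE.ne' hy hy1
  have hQ₂ := countingUnitary_mulVec_searchEigenvector₂ hE.ne' hy hy1
  refine ⟨hQ₁, hQ₂, fun m => ?_⟩
  have hphase₁ : (m : ℂ) * -(I * ((2 * Real.pi * y : ℝ) : ℂ)) =
      -(I * ((2 * m * Real.pi * y : ℝ) : ℂ)) := by push_cast; ring
  have hphase₂ : (m : ℂ) * (I * ((2 * Real.pi * y : ℝ) : ℂ)) =
      I * ((2 * m * Real.pi * y : ℝ) : ℂ) := by push_cast; ring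
  rw [initialState_eq hy hy1, mulVec_add, mulVec_smul, mulVec_smul,
    pow_mulVec_of_mulVec_eq_smul hQ₁, pow_mulVec_of_mulVec_eq_smul hQ₂,
    ← exp_nat_mul, ← exp_nat_mul, hphase₁, hphase₂, smul_smul, smul_smul]
end

section
/- Let A₁, …, Aₙ be pairwise disjoint finite sets of elements of some type (n ≥ 1), let T be a finite set with T ⊆ A₁ ∪ … ∪ Aₙ, assume Aᵢ ∩ T ≠ ∅ for every i (basic confidence), and let α₁, …, αₙ be positive reals with ∑_{i=1}^n αᵢ = 1. For each element w set W(w) = ∑_{i : w ∈ Aᵢ} αᵢ, let ν = (∑_{w ∈ A₁∪…∪Aₙ} W(w)²)^{1/2}, and let y = (∑_{w ∈ T} W(w)²)^{1/2} / ν. Then y ≥ 1/√|A₁ ∪ … ∪ Aₙ|; consequently, for every E > 0 the time T = π/(2Ey) satisfies T ≤ (π/(2E))·√|A₁ ∪ … ∪ Aₙ|. -/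
/-!
With disjoint information sets the weight `W` is constant, equal to `αᵢ`, on each `Aᵢ`, and by
basic confidence every `Aᵢ` contains a target. So each term `W(w)²` of `ν²` is bounded by the
single target term `W(t)²` with `t ∈ Aᵢ ∩ T`, hence by `∑_{t ∈ T} W(t)²`. Summing over the
union gives `ν² ≤ |A₁ ∪ … ∪ Aₙ| · ∑_{t ∈ T} W(t)²`, which is the bound on `y`.
-/

open Finset Function

theorem sum_filter_mem_eq_of_pairwise_disjoint {ι α M : Type*} [Fintype ι] [DecidableEq α]
    [AddCommMonoid M] {A : ι → Finset α} (hA : Pairwise (Disjoint on A)) (c : ι → M)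
    {i : ι} {w : α} (hw : w ∈ A i) :
    ∑ j ∈ univ.filter (fun j => w ∈ A j), c j = c i := by
  have hsingleton : univ.filter (fun j => w ∈ A j) = {i} := by
    ext j
    simp only [mem_filter, mem_univ, true_and, mem_singleton]
    refine ⟨fun hj => ?_, fun hji => hji ▸ hw⟩
    by_contra hji
    exact disjoint_left.mp (hA hji) hj hw
  rw [hsingleton, sum_singleton]

theorem sum_le_card_mul_sum_of_forall_exists_le {α : Type*} {U T : Finset α} {g : α → ℝ}
    (hg : ∀ t ∈ T, 0 ≤ g t) (hdom : ∀ w ∈ U, ∃ t ∈ T, g w ≤ g t) :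
    ∑ w ∈ U, g w ≤ #U * ∑ t ∈ T, g t := by
  calc ∑ w ∈ U, g w ≤ ∑ _w ∈ U, ∑ t ∈ T, g t := by
        refine sum_le_sum fun w hw => ?_
        obtain ⟨t, ht, hwt⟩ := hdom w hw
        exact hwt.trans (single_le_sum hg ht)
    _ = #U * ∑ t ∈ T, g t := by rw [sum_const, nsmul_eq_mul]

theorem one_div_sqrt_le_sqrt_div_sqrt {a b k : ℝ} (hb : 0 < b) (h : b ≤ k * a) :
    1 / √k ≤ √a / √b := by
  rcases le_or_gt k 0 with hk | hk
  · rw [Real.sqrt_eq_zero'.mpr hk, div_zero]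
    positivity
  · have hsqrt : √b ≤ √k * √a := by
      rw [← Real.sqrt_mul hk.le]
      exact Real.sqrt_le_sqrt h
    rw [div_le_div_iff₀ (Real.sqrt_pos.mpr hk) (Real.sqrt_pos.mpr hb)]
    linarith

theorem div_le_mul_of_one_div_le {p s y : ℝ} (hp : 0 ≤ p) (hs : 0 < s) (h : 1 / s ≤ y) :
    p / y ≤ p * s := by
  have hy : 0 < y := (one_div_pos.mpr hs).trans_le h
  rw [div_le_iff₀ hy, mul_assoc]
  exact le_mul_of_one_le_right hp ((div_le_iff₀' hs).mp h)

theorem disjoint_basic_confidence_overlap_bound_general {α : Type*} [DecidableEq α]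
    {n : ℕ}
    (A : Fin n → Finset α)
    (hdisj : ∀ i j, i ≠ j → Disjoint (A i) (A j))
    (T : Finset α)
    (hbc : ∀ i, (A i ∩ T).Nonempty)
    (c : Fin n → ℝ) (hc : ∀ i, 0 < c i)
    (W : α → ℝ)
    (hW : ∀ w, W w = ∑ i ∈ Finset.univ.filter (fun i => w ∈ A i), c i)
    (ν y : ℝ)
    (hν : ν = Real.sqrt (∑ w ∈ Finset.univ.biUnion A, W w ^ 2))
    (hy : y = Real.sqrt (∑ w ∈ T, W w ^ 2) / ν) :
    1 / Real.sqrt ((Finset.univ.biUnion A).card : ℝ) ≤ y ∧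
    ∀ E : ℝ, 0 < E →
      Real.pi / (2 * E * y) ≤
        Real.pi / (2 * E) * Real.sqrt ((Finset.univ.biUnion A).card : ℝ) := by
  set U := univ.biUnion A
  have hWA : ∀ i, ∀ w ∈ A i, W w = c i := fun i w hw =>
    (hW w).trans (sum_filter_mem_eq_of_pairwise_disjoint (fun i j => hdisj i j) c hw)
  have hdom : ∀ w ∈ U, ∃ t ∈ T, W w ^ 2 ≤ W t ^ 2 := by
    intro w hw
    obtain ⟨i, -, hwi⟩ := mem_biUnion.mp hw
    obtain ⟨t, ht⟩ := hbc i
    obtain ⟨hti, htT⟩ := mem_inter.mp ht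
    exact ⟨t, htT, by rw [hWA i w hwi, hWA i t hti]⟩
  have hbound := sum_le_card_mul_sum_of_forall_exists_le (fun t _ => sq_nonneg (W t)) hdom
  -- For an empty union both sides vanish by the junk values `1 / √0 = 0` and `x / 0 = 0`.
  rcases U.eq_empty_or_nonempty with hU | ⟨w, hw⟩
  · simp [hy, hν, hU]
  obtain ⟨i, -, hwi⟩ := mem_biUnion.mp hw
  have hpos : 0 < ∑ w ∈ U, W w ^ 2 :=
    (pow_pos (hWA i w hwi ▸ hc i) 2).trans_le (single_le_sum (fun w _ => sq_nonneg (W w)) hw)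
  have hcard : 0 < (#U : ℝ) := by exact_mod_cast card_pos.mpr ⟨w, hw⟩
  have hy_ge : 1 / √(#U : ℝ) ≤ y := hy ▸ hν ▸ one_div_sqrt_le_sqrt_div_sqrt hpos hbound
  refine ⟨hy_ge, fun E hE => ?_⟩
  rw [← div_div]
  exact div_le_mul_of_one_div_le (by positivity) (Real.sqrt_pos.mpr hcard) hy_ge

/-- **Corollary 3.4** of Chen–Diao (with Remark 3.3(ii)): when the information
sets are pairwise disjoint and basic confidence holds, `y ≥ 1/√(l+R)` where
`l+R = |A₁ ∪ … ∪ Aₙ|`, so the search time `T = π/(2Ey)` is at most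
`(π/(2E))·√(l+R)`, independently of `n`. -/
theorem disjoint_basic_confidence_overlap_bound {α : Type*} [DecidableEq α]
    {n : ℕ} (hn : 1 ≤ n)
    (A : Fin n → Finset α)
    (hdisj : ∀ i j, i ≠ j → Disjoint (A i) (A j))
    (T : Finset α)
    (hT : T ⊆ Finset.univ.biUnion A)
    (hbc : ∀ i, (A i ∩ T).Nonempty)
    (c : Fin n → ℝ) (hc : ∀ i, 0 < c i) (hcsum : ∑ i, c i = 1)
    (W : α → ℝ)
    (hW : ∀ w, W w = ∑ i ∈ Finset.univ.filter (fun i => w ∈ A i), c i)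
    (ν y : ℝ)
    (hν : ν = Real.sqrt (∑ w ∈ Finset.univ.biUnion A, W w ^ 2))
    (hy : y = Real.sqrt (∑ w ∈ T, W w ^ 2) / ν) :
    1 / Real.sqrt ((Finset.univ.biUnion A).card : ℝ) ≤ y ∧
    ∀ E : ℝ, 0 < E →
      Real.pi / (2 * E * y) ≤
        Real.pi / (2 * E) * Real.sqrt ((Finset.univ.biUnion A).card : ℝ) :=
  disjoint_basic_confidence_overlap_bound_general A hdisj T hbc c hc W hW ν y hν hy
end
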